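/- Let (E, ≺) be a finite poset with an indexed chain partition into n disjoint chains, and let (S, <) be its ES-transform. Then (S, <) is interleaving-consistent. -/

import Mathlib

open scoped Classical

/-- An *indexed chain partition* of a poset `E` into `n` disjoint chains:
numbers `m i ≥ 1` and maps `e i : {1,…,m i} → E` which are strictly
order-preserving (hence injective), have pairwise disjoint images, and
jointly cover `E`.  Write `(i,k)` for `e i k`. -/
structure EventCP (E : Type*) [PartialOrder E] (n : ℕ) where
  m : Fin n → ℕ
  one_le_m : ∀ i : Fin n, 1 ≤ m i
  e : Fin n → ℕ → E
  mono : ∀ i : Fin n, ∀ k l : ℕ, 1 ≤ k → k < l → l ≤ m i → e i k < e i l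
  disj : ∀ i j : Fin n, i ≠ j → ∀ k l : ℕ,
    1 ≤ k → k ≤ m i → 1 ≤ l → l ≤ m j → e i k ≠ e j l
  cover : ∀ x : E, ∃ i : Fin n, ∃ k : ℕ, 1 ≤ k ∧ k ≤ m i ∧ e i k = x

variable {E : Type*} [PartialOrder E] {n : ℕ}

/-- The state set of the ES-transform: `S = {[i,k] : 0 ≤ k ≤ m i}`, realized
as the pairs `(i,k)` of `Fin n × ℕ` with `k ≤ m i`. -/
def EventCP.StateSet (P : EventCP E n) : Set (Fin n × ℕ) :=
  {p | p.2 ≤ P.m p.1}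

/-- The ES-transform strict relation on states: `[i,r] < [j,s]` iff `r < s`
when `i = j`, and iff `r + 1 ≤ m i`, `1 ≤ s`, and `(i,r+1) ≺ (j,s)` in `E`
when `i ≠ j`. -/
def EventCP.slt (P : EventCP E n) (a b : Fin n × ℕ) : Prop :=
  if a.1 = b.1 then a.2 < b.2
  else a.2 + 1 ≤ P.m a.1 ∧ 1 ≤ b.2 ∧ P.e a.1 (a.2 + 1) < P.e b.1 b.2

/-- Two states are *incomparable* in the ES-transform. -/
def EventCP.IncompS (P : EventCP E n) (a b : Fin n × ℕ) : Prop :=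
  a ≠ b ∧ ¬ P.slt a b ∧ ¬ P.slt b a

/-- A finset of states is an *antichain* of the ES-transform `(S, <)`:
it consists of states and is pairwise incomparable. -/
def EventCP.IsACS (P : EventCP E n) (A : Finset (Fin n × ℕ)) : Prop :=
  ↑A ⊆ P.StateSet ∧ ∀ a ∈ A, ∀ b ∈ A, a ≠ b → P.IncompS a b

/-- The *width* of the ES-transform `(S, <)`: the maximum cardinality of an
antichain. -/
noncomputable def EventCP.widthS (P : EventCP E n) : ℕ :=
  sSup {c : ℕ | ∃ A : Finset (Fin n × ℕ), P.IsACS A ∧ A.card = c}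

/-- The reflexive closure `≤` of the ES-transform relation. -/
def EventCP.sleS (P : EventCP E n) (a b : Fin n × ℕ) : Prop :=
  a = b ∨ P.slt a b

/-- Order on antichains of the ES-transform: `A ≤ B` iff every element of `A`
is below some element of `B`. -/
def EventCP.ACleS (P : EventCP E n) (A B : Finset (Fin n × ℕ)) : Prop :=
  ∀ a ∈ A, ∃ b ∈ B, P.sleS a b

/-- A *width-antichain* of the ES-transform. -/
def EventCP.IsWAS (P : EventCP E n) (A : Finset (Fin n × ℕ)) : Prop :=
  P.IsACS A ∧ A.card = P.widthS

/-!
An antichain of the ES-transform meets each chain in at most one state, and the states `[i,0]`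
form an antichain meeting every chain; so the width is `n` and a width-antichain picks exactly one
state on every chain. If `W < W''`, then chain by chain the state of `W` lies weakly below that
of `W''`, strictly on some "lagging" chains. Advance, among the lagging chains, one whose next
event `(i, k+1)` is `≺`-minimal: a state of `W` below the advanced state `[i, k+1]` would lie on a
lagging chain with a smaller next event. Hence the advanced set is again a width-antichain, and it
shares all but one state with `W`.
-/

open Finset

namespace EventCP

variable {P : EventCP E n} {A B : Finset (Fin n × ℕ)} {a b p q : Fin n × ℕ}

theorem e_le_e {i : Fin n} {k l : ℕ} (hk : 1 ≤ k) (hkl : k ≤ l) (hl : l ≤ P.m i) :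
    P.e i k ≤ P.e i l := by
  rcases hkl.lt_or_eq with h | rfl
  · exact (P.mono i k l hk h hl).le
  · exact le_rfl

theorem slt_iff_of_fst_eq (h : a.1 = b.1) : P.slt a b ↔ a.2 < b.2 := by
  simp [slt, h]

theorem slt_iff_of_fst_ne (h : a.1 ≠ b.1) :
    P.slt a b ↔ a.2 + 1 ≤ P.m a.1 ∧ 1 ≤ b.2 ∧ P.e a.1 (a.2 + 1) < P.e b.1 b.2 := by
  simp [slt, h]

theorem slt_irrefl (a : Fin n × ℕ) : ¬ P.slt a a := by
  simp [slt]

theorem slt_succ (p : Fin n × ℕ) : P.slt p (p.1, p.2 + 1) := by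
  simp [slt]

theorem slt_of_slt_of_le_left (h : P.slt a b) (hfst : p.1 = a.1) (hsnd : p.2 ≤ a.2) :
    P.slt p b := by
  by_cases hab : a.1 = b.1
  · rw [slt_iff_of_fst_eq hab] at h
    rw [slt_iff_of_fst_eq (hfst.trans hab)]
    omega
  · obtain ⟨hm, hb, he⟩ := (slt_iff_of_fst_ne hab).1 h
    refine (slt_iff_of_fst_ne (by rwa [hfst])).2 ⟨by rw [hfst]; omega, hb, lt_of_le_of_lt ?_ he⟩
    rw [hfst]
    exact e_le_e (by omega) (by omega) hm

theorem slt_of_slt_of_le_right (h : P.slt a b) (hfst : b.1 = q.1) (hsnd : b.2 ≤ q.2)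
    (hq : q.2 ≤ P.m q.1) : P.slt a q := by
  by_cases hab : a.1 = b.1
  · rw [slt_iff_of_fst_eq hab] at h
    rw [slt_iff_of_fst_eq (hab.trans hfst)]
    omega
  · obtain ⟨hm, hb, he⟩ := (slt_iff_of_fst_ne hab).1 h
    refine (slt_iff_of_fst_ne (by rwa [← hfst])).2 ⟨hm, by omega, lt_of_lt_of_le he ?_⟩
    rw [hfst]
    exact e_le_e hb hsnd hq

theorem isACS_iff :
    P.IsACS A ↔ ↑A ⊆ P.StateSet ∧ (A : Set (Fin n × ℕ)).Pairwise P.IncompS :=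
  Iff.rfl

namespace IsACS

theorem not_slt (hA : P.IsACS A) (ha : a ∈ A) (hb : b ∈ A) : ¬ P.slt a b := by
  rcases eq_or_ne a b with rfl | hab
  · exact slt_irrefl a
  · exact (hA.2 a ha b hb hab).2.1

theorem eq_of_fst_eq (hA : P.IsACS A) (ha : a ∈ A) (hb : b ∈ A) (h : a.1 = b.1) : a = b := by
  by_contra hab
  have hab' := hA.not_slt ha hb
  have hba := hA.not_slt hb ha
  rw [slt_iff_of_fst_eq h] at hab'
  rw [slt_iff_of_fst_eq h.symm] at hba
  exact hab (Prod.ext h (by omega))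

theorem injOn_fst (hA : P.IsACS A) : Set.InjOn Prod.fst (A : Set (Fin n × ℕ)) :=
  fun _ ha _ hb h => hA.eq_of_fst_eq ha hb h

theorem card_le (hA : P.IsACS A) : A.card ≤ n := by
  simpa using card_le_card_of_injOn Prod.fst (fun _ _ => mem_univ _) hA.injOn_fst

theorem exists_mem_fst_eq (hA : P.IsACS A) (hcard : A.card = n) (i : Fin n) :
    ∃ p ∈ A, p.1 = i := by
  have himage : A.image Prod.fst = univ :=
    eq_univ_of_card _ (by rw [card_image_of_injOn hA.injOn_fst, hcard, Fintype.card_fin])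
  exact mem_image.1 (himage ▸ mem_univ i)

theorem snd_le_of_sleS (hA : P.IsACS A) (hb : b ∈ A) (hq : q ∈ A) (hpb : P.sleS p b)
    (hfst : q.1 = p.1) : p.2 ≤ q.2 := by
  by_contra! hlt
  apply hA.not_slt hq hb
  rcases hpb with rfl | hpb
  · exact (slt_iff_of_fst_eq hfst).2 hlt
  · exact slt_of_slt_of_le_left hpb hfst hlt.le

theorem succ_notMem (hA : P.IsACS A) (hp : p ∈ A) : (p.1, p.2 + 1) ∉ A := fun h => by
  simpa using congrArg Prod.snd (hA.eq_of_fst_eq h hp rfl)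

theorem insert_succ_erase (hA : P.IsACS A) (hp : p ∈ A) (hm : p.2 + 1 ≤ P.m p.1)
    (hbelow : ∀ q ∈ A, q ≠ p → ¬ P.slt q (p.1, p.2 + 1)) :
    P.IsACS (insert (p.1, p.2 + 1) (A.erase p)) := by
  have hincomp : ∀ q ∈ A, q ≠ p →
      P.IncompS (p.1, p.2 + 1) q ∧ P.IncompS q (p.1, p.2 + 1) := by
    intro q hq hqp
    have hfst : q.1 ≠ p.1 := fun h => hqp (hA.eq_of_fst_eq hq hp h)
    have hne : q ≠ (p.1, p.2 + 1) := fun h => hfst (by rw [h])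
    have hnot : ¬ P.slt (p.1, p.2 + 1) q := fun h =>
      hA.not_slt hp hq (slt_of_slt_of_le_left h rfl (Nat.le_succ _))
    exact ⟨⟨hne.symm, hnot, hbelow q hq hqp⟩, ⟨hne, hbelow q hq hqp, hnot⟩⟩
  refine isACS_iff.2 ⟨?_, ?_⟩
  · intro x hx
    rcases mem_insert.1 hx with rfl | hx
    · exact hm
    · exact hA.1 (mem_of_mem_erase hx)
  · rw [coe_insert]
    refine ((isACS_iff.1 hA).2.mono (coe_subset.2 (erase_subset p A))).insert fun q hq _ => ?_
    obtain ⟨hqp, hq⟩ := mem_erase.1 hq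
    exact hincomp q hq hqp

end IsACS

theorem isACS_bottom : P.IsACS (univ.image fun i : Fin n => (i, 0)) := by
  refine ⟨fun x hx => ?_, ?_⟩
  · obtain ⟨i, -, rfl⟩ := mem_image.1 hx
    exact Nat.zero_le _
  · simp only [mem_image, mem_univ, true_and]
    rintro _ ⟨i, rfl⟩ _ ⟨j, rfl⟩ hij
    refine ⟨hij, ?_, ?_⟩ <;> simp [slt]

theorem widthS_eq : P.widthS = n := by
  refine IsGreatest.csSup_eq ⟨⟨_, isACS_bottom, ?_⟩, ?_⟩
  · rw [card_image_of_injective _ fun i j h => congrArg Prod.fst h, card_univ, Fintype.card_fin]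
  · rintro _ ⟨A, hA, rfl⟩
    exact hA.card_le

theorem isWAS_iff : P.IsWAS A ↔ P.IsACS A ∧ A.card = n := by
  rw [IsWAS, widthS_eq]

theorem exists_lagging (hAcard : A.card = n) (hB : P.IsACS B)
    (hBcard : B.card = n) (hAB : P.ACleS A B) (hne : A ≠ B) :
    ∃ p ∈ A, ∃ q ∈ B, q.1 = p.1 ∧ p.2 < q.2 := by
  by_contra! h
  refine hne (eq_of_subset_of_card_le (fun p hp => ?_) (by omega))
  obtain ⟨q, hq, hfst⟩ := hB.exists_mem_fst_eq hBcard p.1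
  obtain ⟨b, hb, hpb⟩ := hAB p hp
  have hle := hB.snd_le_of_sleS hb hq hpb hfst
  have hge := h p hp q hq hfst
  have hpq : p = q := Prod.ext hfst.symm (le_antisymm hle hge)
  rwa [hpq]

theorem lagging_of_slt_succ (hB : P.IsACS B) (hBcard : B.card = n) {p₀ q₀ : Fin n × ℕ}
    (hq₀ : q₀ ∈ B) (hfst : q₀.1 = p₀.1) (hlt : p₀.2 < q₀.2)
    (h : P.slt p (p₀.1, p₀.2 + 1)) : ∃ q ∈ B, q.1 = p.1 ∧ p.2 < q.2 := by
  obtain ⟨q, hq, hqp⟩ := hB.exists_mem_fst_eq hBcard p.1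
  refine ⟨q, hq, hqp, ?_⟩
  by_contra! hle
  exact hB.not_slt hq hq₀ <|
    slt_of_slt_of_le_right (slt_of_slt_of_le_left h hqp hle) hfst.symm hlt (hB.1 hq₀)

theorem exists_advanceable (hA : P.IsACS A) (hAcard : A.card = n) (hB : P.IsACS B)
    (hBcard : B.card = n) (hAB : P.ACleS A B) (hne : A ≠ B) :
    ∃ p ∈ A, p.2 + 1 ≤ P.m p.1 ∧ ∀ q ∈ A, q ≠ p → ¬ P.slt q (p.1, p.2 + 1) := by
  set T := A.filter fun p => ∃ q ∈ B, q.1 = p.1 ∧ p.2 < q.2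
  have hT : T.Nonempty := by
    obtain ⟨p, hp, hlag⟩ := exists_lagging hAcard hB hBcard hAB hne
    exact ⟨p, mem_filter.2 ⟨hp, hlag⟩⟩
  obtain ⟨p, hpT, hmin⟩ := T.exists_minimalFor (fun p => P.e p.1 (p.2 + 1)) hT
  obtain ⟨hp, q₀, hq₀, hfst, hlt⟩ := mem_filter.1 hpT
  refine ⟨p, hp, ?_, fun q hq hqp h => ?_⟩
  · have hq₀m : q₀.2 ≤ P.m q₀.1 := hB.1 hq₀
    rw [hfst] at hq₀m
    omega
  · have hqT : q ∈ T := mem_filter.2 ⟨hq, lagging_of_slt_succ hB hBcard hq₀ hfst hlt h⟩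
    have hfst' : q.1 ≠ p.1 := fun h' => hqp (hA.eq_of_fst_eq hq hp h')
    have he := ((slt_iff_of_fst_ne (b := (p.1, p.2 + 1)) hfst').1 h).2.2
    exact he.not_ge (hmin hqT he.le)

theorem aCleS_insert_succ_erase (p : Fin n × ℕ) (A : Finset (Fin n × ℕ)) :
    P.ACleS A (insert (p.1, p.2 + 1) (A.erase p)) := by
  intro a ha
  by_cases hap : a = p
  · subst hap
    exact ⟨_, mem_insert_self _ _, Or.inr (slt_succ a)⟩
  · exact ⟨a, mem_insert_of_mem (mem_erase.2 ⟨hap, ha⟩), Or.inl rfl⟩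

end EventCP

theorem ES_transform_interleavingConsistent_general (P : EventCP E n) :
    ∀ W : Finset (Fin n × ℕ), P.IsWAS W →
      (∃ W'' : Finset (Fin n × ℕ), P.IsWAS W'' ∧ P.ACleS W W'' ∧ W ≠ W'') →
      ∃ W' : Finset (Fin n × ℕ), P.IsWAS W' ∧ P.ACleS W W' ∧ W ≠ W' ∧
        (W ∩ W').card = W.card - 1 := by
  rintro W hW ⟨W'', hW'', hle, hne⟩
  rw [EventCP.isWAS_iff] at hW hW''
  obtain ⟨p, hp, hm, hbelow⟩ := EventCP.exists_advanceable hW.1 hW.2 hW''.1 hW''.2 hle hne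
  have hsucc := hW.1.succ_notMem hp
  refine ⟨insert (p.1, p.2 + 1) (W.erase p),
    EventCP.isWAS_iff.2 ⟨hW.1.insert_succ_erase hp hm hbelow, ?_⟩,
    EventCP.aCleS_insert_succ_erase p W,
    fun h => hsucc (h ▸ mem_insert_self _ _), ?_⟩
  · rw [card_insert_of_notMem fun h => hsucc (mem_of_mem_erase h), card_erase_add_one hp, hW.2]
  · rw [inter_insert_of_notMem hsucc, inter_eq_right.2 (erase_subset p W),
      card_erase_of_mem hp]

/-- The ES-transform `(S, <)` is interleaving-consistent:
every width-antichain strictly below some width-antichain can be advanced to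
a width-antichain differing from it in exactly one element. -/
theorem ES_transform_interleavingConsistent (P : EventCP E n) [Fintype E] :
    ∀ W : Finset (Fin n × ℕ), P.IsWAS W →
      (∃ W'' : Finset (Fin n × ℕ), P.IsWAS W'' ∧ P.ACleS W W'' ∧ W ≠ W'') →
      ∃ W' : Finset (Fin n × ℕ), P.IsWAS W' ∧ P.ACleS W W' ∧ W ≠ W' ∧
        (W ∩ W').card = W.card - 1 :=
  ES_transform_interleavingConsistent_general P
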